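/- arXiv:2107.01369 — 3 statements merged into one kernel-verified Lean document; each statement's English description precedes it below -/
import Mathlib

section
/- Let a > 0, γ > 1 and 0 < r̲ ≤ r̄ be real constants. There exists a constant c > 0, depending only on a, γ, r̲, r̄, such that for every r ∈ [r̲, r̄] and every ϱ ≥ 0 with ϱ ∉ [r̲/2, 2r̄], the relative entropy satisfies E(ϱ|r) ≥ c (1 + ϱ^γ). -/
/-- Tangent-line inequality for `x ↦ x^γ` at `y > 0`. -/
lemma rpow_tangent {γ : ℝ} (hγ : 1 < γ) {x y : ℝ} (hx : 0 ≤ x) (hy : 0 < y) :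
    y ^ γ + γ * y ^ (γ - 1) * (x - y) ≤ x ^ γ := by
  have hyne : y ≠ 0 := ne_of_gt hy
  have hs : -1 ≤ x / y - 1 := by
    have : 0 ≤ x / y := div_nonneg hx hy.le
    linarith
  have hb := one_add_mul_self_le_rpow_one_add hs hγ.le
  have h1 : (1 : ℝ) + (x / y - 1) = x / y := by ring
  rw [h1] at hb
  have hxy : (x / y) ^ γ = x ^ γ / y ^ γ := Real.div_rpow hx hy.le γ
  rw [hxy] at hb
  have hyγ : (0 : ℝ) < y ^ γ := Real.rpow_pos_of_pos hy γ
  have hb2 : (1 + γ * (x / y - 1)) * y ^ γ ≤ x ^ γ := by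
    have := mul_le_mul_of_nonneg_right hb hyγ.le
    rwa [div_mul_cancel₀ _ (ne_of_gt hyγ)] at this
  calc y ^ γ + γ * y ^ (γ - 1) * (x - y)
      = (1 + γ * (x / y - 1)) * y ^ γ := by
        have h2 : y ^ (γ - 1) = y ^ γ / y := by
          rw [Real.rpow_sub hy, Real.rpow_one]
        rw [h2]
        field_simp
    _ ≤ x ^ γ := hb2

/-- Two-tangent (chord) lower bound: for `0 ≤ x`, `0 < m`, `0 < r`,
`x^γ - r^γ - γ r^(γ-1) (x - r) ≥ γ (m^(γ-1) - r^(γ-1)) (x - m)`. -/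
lemma rpow_chord {γ : ℝ} (hγ : 1 < γ) {x m r : ℝ} (hx : 0 ≤ x) (hm : 0 < m)
    (hr : 0 < r) :
    γ * (m ^ (γ - 1) - r ^ (γ - 1)) * (x - m) ≤
      x ^ γ - r ^ γ - γ * r ^ (γ - 1) * (x - r) := by
  have h1 := rpow_tangent hγ hx hm
  have h2 := rpow_tangent hγ hm.le hr
  nlinarith [h1, h2]

set_option maxHeartbeats 1600000 in
/-- Far-field lower bound for the relative entropy
`E(ϱ|r) = H(ϱ) - H(r) - H'(r)(ϱ - r)` (with `H(ϱ) = (a/(γ-1)) ϱ^γ`):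
uniformly for `r ∈ [r̲, r̄]` and `ϱ ≥ 0` outside `[r̲/2, 2 r̄]`,
`E(ϱ|r) ≥ c (1 + ϱ^γ)`. -/
theorem stmt_5 (a γ rlo rhi : ℝ) (ha : 0 < a) (hγ : 1 < γ) (hrlo : 0 < rlo)
    (hr : rlo ≤ rhi) :
    ∃ c : ℝ, 0 < c ∧
      ∀ r : ℝ, r ∈ Set.Icc rlo rhi →
        ∀ ϱ : ℝ, 0 ≤ ϱ → ϱ ∉ Set.Icc (rlo / 2) (2 * rhi) →
          c * (1 + ϱ ^ γ) ≤
            a / (γ - 1) * ϱ ^ γ - a / (γ - 1) * r ^ γ -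
              a * γ / (γ - 1) * r ^ (γ - 1) * (ϱ - r) := by
  have hγ1 : (0 : ℝ) < γ - 1 := by linarith
  have hK : 0 < a / (γ - 1) := div_pos ha hγ1
  have hrhi : 0 < rhi := lt_of_lt_of_le hrlo hr
  -- exponents are positive
  have hexp : 0 < γ - 1 := hγ1
  -- constants for the two regimes
  have h34 : (3 / 4 : ℝ) ^ (γ - 1) < 1 ^ (γ - 1) := by
    apply Real.rpow_lt_rpow (by norm_num) (by norm_num) hexp
  have h12 : (1 / 2 : ℝ) ^ (γ - 1) < (3 / 4 : ℝ) ^ (γ - 1) := by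
    apply Real.rpow_lt_rpow (by norm_num) (by norm_num) hexp
  rw [Real.one_rpow] at h34
  set α : ℝ := γ * (1 - (3 / 4 : ℝ) ^ (γ - 1)) / 4 with hα
  set β : ℝ := γ * ((3 / 4 : ℝ) ^ (γ - 1) - (1 / 2 : ℝ) ^ (γ - 1)) / 4 with hβ
  have hγ0 : (0 : ℝ) < γ := by linarith
  have hαpos : 0 < α := by
    apply div_pos (mul_pos hγ0 (by linarith)) (by norm_num)
  have hβpos : 0 < β := by
    apply div_pos (mul_pos hγ0 (by linarith)) (by norm_num)
  have hrloγ : 0 < rlo ^ γ := Real.rpow_pos_of_pos hrlo γ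
  have hden1 : 0 < 1 + (rlo / 2) ^ γ := by
    positivity
  have hden2 : 0 < 1 + ((2 * rhi) ^ γ)⁻¹ := by
    have : 0 < (2 * rhi) ^ γ := Real.rpow_pos_of_pos (by linarith) γ
    positivity
  set c1 : ℝ := a / (γ - 1) * (α * rlo ^ γ) / (1 + (rlo / 2) ^ γ) with hc1
  set c2 : ℝ := a / (γ - 1) * β / (1 + ((2 * rhi) ^ γ)⁻¹) with hc2
  have hc1pos : 0 < c1 := div_pos (mul_pos hK (mul_pos hαpos hrloγ)) hden1
  have hc2pos : 0 < c2 := div_pos (mul_pos hK hβpos) hden2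
  refine ⟨min c1 c2, lt_min hc1pos hc2pos, ?_⟩
  rintro r ⟨hr1, hr2⟩ ϱ hϱ hout
  have hrpos : 0 < r := lt_of_lt_of_le hrlo hr1
  have key : ∀ m : ℝ, 0 < m →
      a / (γ - 1) * (γ * (m ^ (γ - 1) - r ^ (γ - 1)) * (ϱ - m)) ≤
        a / (γ - 1) * ϱ ^ γ - a / (γ - 1) * r ^ γ -
          a * γ / (γ - 1) * r ^ (γ - 1) * (ϱ - r) := by
    intro m hm
    have h := rpow_chord hγ hϱ hm hrpos
    have := mul_le_mul_of_nonneg_left h hK.le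
    calc a / (γ - 1) * (γ * (m ^ (γ - 1) - r ^ (γ - 1)) * (ϱ - m))
        ≤ a / (γ - 1) * (ϱ ^ γ - r ^ γ - γ * r ^ (γ - 1) * (ϱ - r)) := this
      _ = a / (γ - 1) * ϱ ^ γ - a / (γ - 1) * r ^ γ -
          a * γ / (γ - 1) * r ^ (γ - 1) * (ϱ - r) := by ring
  have hout' : rlo / 2 ≤ ϱ → 2 * rhi < ϱ := by simpa [Set.mem_Icc] using hout
  rcases lt_or_ge ϱ (rlo / 2) with hlow | hge
  · -- ϱ < rlo / 2
    have hϱsmall : ϱ < r / 2 := lt_of_lt_of_le hlow (by linarith)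
    -- use m = (3/4) r
    have hm : 0 < (3 / 4 : ℝ) * r := by linarith
    have hkey := key ((3 / 4 : ℝ) * r) hm
    -- lower-bound the chord term
    have hmr : ((3 / 4 : ℝ) * r) ^ (γ - 1) = (3 / 4 : ℝ) ^ (γ - 1) * r ^ (γ - 1) :=
      Real.mul_rpow (by norm_num) hrpos.le
    have hrγ1 : 0 < r ^ (γ - 1) := Real.rpow_pos_of_pos hrpos _
    have hchord : α * r ^ γ ≤
        γ * (((3 / 4 : ℝ) * r) ^ (γ - 1) - r ^ (γ - 1)) * (ϱ - (3 / 4 : ℝ) * r) := by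
      rw [hmr, hα]
      have h1 : r / 4 ≤ (3 / 4 : ℝ) * r - ϱ := by linarith
      have hrγeq : r ^ γ = r ^ (γ - 1) * r := by
        rw [← Real.rpow_add_one (ne_of_gt hrpos)]; ring_nf
      rw [hrγeq]
      have h3 : 0 ≤ (1 - (3 / 4 : ℝ) ^ (γ - 1)) * r ^ (γ - 1) :=
        mul_nonneg (by linarith) hrγ1.le
      have h4 := mul_le_mul_of_nonneg_left h1 (mul_nonneg hγ0.le h3)
      nlinarith [h4]
    have hEb : a / (γ - 1) * (α * r ^ γ) ≤
        a / (γ - 1) * ϱ ^ γ - a / (γ - 1) * r ^ γ -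
          a * γ / (γ - 1) * r ^ (γ - 1) * (ϱ - r) :=
      le_trans (mul_le_mul_of_nonneg_left hchord hK.le) hkey
    -- bound 1 + ϱ^γ
    have hϱγ : ϱ ^ γ ≤ (rlo / 2) ^ γ :=
      Real.rpow_le_rpow hϱ (by linarith) hγ0.le
    have hrγlo : rlo ^ γ ≤ r ^ γ := Real.rpow_le_rpow hrlo.le hr1 hγ0.le
    have hub : min c1 c2 * (1 + ϱ ^ γ) ≤ c1 * (1 + (rlo / 2) ^ γ) := by
      have h1 : min c1 c2 ≤ c1 := min_le_left _ _
      have h2 : (1 : ℝ) + ϱ ^ γ ≤ 1 + (rlo / 2) ^ γ := by linarith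
      have h3 : 0 ≤ 1 + ϱ ^ γ := by positivity
      exact mul_le_mul h1 h2 h3 hc1pos.le
    have hc1eq : c1 * (1 + (rlo / 2) ^ γ) = a / (γ - 1) * (α * rlo ^ γ) := by
      rw [hc1]; exact div_mul_cancel₀ _ (ne_of_gt hden1)
    refine le_trans hub ?_
    rw [hc1eq]
    refine le_trans ?_ hEb
    have h5 : α * rlo ^ γ ≤ α * r ^ γ :=
      mul_le_mul_of_nonneg_left hrγlo hαpos.le
    exact mul_le_mul_of_nonneg_left h5 hK.le
  · -- ϱ > 2 rhi
    have hhigh : 2 * rhi < ϱ := hout' hge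
    have hϱbig : 2 * r ≤ ϱ := by linarith
    have hϱpos : 0 < ϱ := by linarith
    -- use m = (3/4) ϱ
    have hm : 0 < (3 / 4 : ℝ) * ϱ := by linarith
    have hkey := key ((3 / 4 : ℝ) * ϱ) hm
    have hmϱ : ((3 / 4 : ℝ) * ϱ) ^ (γ - 1) = (3 / 4 : ℝ) ^ (γ - 1) * ϱ ^ (γ - 1) :=
      Real.mul_rpow (by norm_num) hϱpos.le
    have hϱγ1 : 0 < ϱ ^ (γ - 1) := Real.rpow_pos_of_pos hϱpos _
    -- r ≤ ϱ/2 so r^(γ-1) ≤ (1/2)^(γ-1) ϱ^(γ-1)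
    have hrle : r ^ (γ - 1) ≤ (1 / 2 : ℝ) ^ (γ - 1) * ϱ ^ (γ - 1) := by
      have : r ^ (γ - 1) ≤ ((1 / 2 : ℝ) * ϱ) ^ (γ - 1) :=
        Real.rpow_le_rpow hrpos.le (by linarith) hexp.le
      rwa [Real.mul_rpow (by norm_num) hϱpos.le] at this
    have hchord2 : β * ϱ ^ γ ≤
        γ * (((3 / 4 : ℝ) * ϱ) ^ (γ - 1) - r ^ (γ - 1)) * (ϱ - (3 / 4 : ℝ) * ϱ) := by
      have hdiff : ((3 / 4 : ℝ) ^ (γ - 1) - (1 / 2 : ℝ) ^ (γ - 1)) * ϱ ^ (γ - 1) ≤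
          (3 / 4 : ℝ) ^ (γ - 1) * ϱ ^ (γ - 1) - r ^ (γ - 1) := by
        rw [sub_mul]; linarith [hrle]
      have hϱγeq : ϱ ^ γ = ϱ ^ (γ - 1) * ϱ := by
        rw [← Real.rpow_add_one (ne_of_gt hϱpos)]; ring_nf
      rw [hmϱ, hβ, hϱγeq]
      have h6 := mul_le_mul_of_nonneg_right hdiff hϱpos.le
      have h7 := mul_le_mul_of_nonneg_left h6 (show (0:ℝ) ≤ γ / 4 by positivity)
      calc γ * ((3 / 4 : ℝ) ^ (γ - 1) - (1 / 2 : ℝ) ^ (γ - 1)) / 4 * (ϱ ^ (γ - 1) * ϱ)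
          = γ / 4 * (((3 / 4 : ℝ) ^ (γ - 1) - (1 / 2 : ℝ) ^ (γ - 1)) * ϱ ^ (γ - 1) * ϱ) := by
            ring
        _ ≤ γ / 4 * (((3 / 4 : ℝ) ^ (γ - 1) * ϱ ^ (γ - 1) - r ^ (γ - 1)) * ϱ) := h7
        _ = γ * ((3 / 4 : ℝ) ^ (γ - 1) * ϱ ^ (γ - 1) - r ^ (γ - 1)) * (ϱ - 3 / 4 * ϱ) := by
            ring
    have hEb : a / (γ - 1) * (β * ϱ ^ γ) ≤
        a / (γ - 1) * ϱ ^ γ - a / (γ - 1) * r ^ γ -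
          a * γ / (γ - 1) * r ^ (γ - 1) * (ϱ - r) := by
      refine le_trans (mul_le_mul_of_nonneg_left hchord2 hK.le) hkey
    -- bound 1 + ϱ^γ ≤ (1 + (2 rhi)^(-γ)) ϱ^γ
    have hϱγpos : 0 < ϱ ^ γ := Real.rpow_pos_of_pos hϱpos γ
    have h2rhiγ : 0 < (2 * rhi) ^ γ := Real.rpow_pos_of_pos (by linarith) γ
    have hone : (1 : ℝ) ≤ ((2 * rhi) ^ γ)⁻¹ * ϱ ^ γ := by
      rw [← div_eq_inv_mul, le_div_iff₀ h2rhiγ, one_mul]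
      exact Real.rpow_le_rpow (by linarith) hhigh.le hγ0.le
    have hub : min c1 c2 * (1 + ϱ ^ γ) ≤ c2 * ((1 + ((2 * rhi) ^ γ)⁻¹) * ϱ ^ γ) := by
      have h1 : min c1 c2 ≤ c2 := min_le_right _ _
      have h2 : (1 : ℝ) + ϱ ^ γ ≤ (1 + ((2 * rhi) ^ γ)⁻¹) * ϱ ^ γ := by
        rw [add_mul, one_mul]; linarith [hone]
      have h3 : 0 ≤ 1 + ϱ ^ γ := by positivity
      exact mul_le_mul h1 h2 h3 hc2pos.le
    have h8 : c2 * (1 + ((2 * rhi) ^ γ)⁻¹) = a / (γ - 1) * β := by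
      rw [hc2]; exact div_mul_cancel₀ _ (ne_of_gt hden2)
    refine le_trans hub ?_
    rw [← mul_assoc, h8, mul_assoc]
    exact hEb
end

section
/- Let a > 0, γ > 1, 0 < r̲ ≤ r̄ be real constants and d ≥ 1 an integer. For every δ > 0 there exists a constant C > 0, depending only on a, γ, r̲, r̄, δ, such that for all ϱ ≥ 0, all r ∈ [r̲, r̄] and all w ∈ ℝ^d: |ϱ − r|·|w| ≤ δ |w|² + C ( E(ϱ|r) + ϱ |w|² ), where E(ϱ|r) := H(ϱ) − H(r) − H'(r)(ϱ − r) and H(ϱ) = (a/(γ−1)) ϱ^γ. -/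
open Real

/-- Tangent line inequality for `x ^ p`, `p ≥ 1`. -/
lemma my_tangent {p : ℝ} (hp : 1 ≤ p) {x y : ℝ} (hx : 0 ≤ x) (hy : 0 < y) :
    y ^ p + p * y ^ (p - 1) * (x - y) ≤ x ^ p := by
  have hs : -1 ≤ x / y - 1 := by
    have : 0 ≤ x / y := div_nonneg hx hy.le
    linarith
  have h := one_add_mul_self_le_rpow_one_add hs hp
  have h1 : 1 + (x / y - 1) = x / y := by ring
  rw [h1, Real.div_rpow hx hy.le] at h
  have hyp : (0:ℝ) < y ^ p := Real.rpow_pos_of_pos hy p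
  have h2 : (1 + p * (x / y - 1)) * y ^ p ≤ x ^ p := by
    rw [← le_div_iff₀ hyp] at *
    exact h
  calc y ^ p + p * y ^ (p - 1) * (x - y)
      = (1 + p * (x / y - 1)) * y ^ p := by
        rw [Real.rpow_sub hy, Real.rpow_one]
        field_simp
    _ ≤ x ^ p := h2

/-- Concave-side tangent: for `0 < β ≤ 1` and `0 < y ≤ x`,
`β * x ^ (β - 1) * (x - y) ≤ x ^ β - y ^ β`. -/
lemma my_concave_tangent {β : ℝ} (hβ0 : 0 < β) (hβ1 : β ≤ 1) {x y : ℝ}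
    (hy : 0 < y) (hxy : y ≤ x) : β * x ^ (β - 1) * (x - y) ≤ x ^ β - y ^ β := by
  have hx : 0 < x := hy.trans_le hxy
  have hu : 0 < y / x := div_pos hy hx
  have key : (y / x) ^ β * 1 ^ (1 - β) ≤ β * (y / x) + (1 - β) * 1 :=
    Real.geom_mean_le_arith_mean2_weighted hβ0.le (by linarith) hu.le zero_le_one
      (by ring)
  rw [Real.one_rpow, mul_one, mul_one] at key
  have hxb : (0:ℝ) < x ^ β := Real.rpow_pos_of_pos hx β
  have hdiv : (y / x) ^ β = y ^ β / x ^ β := Real.div_rpow hy.le hx.le β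
  rw [hdiv] at key
  have key2 : y ^ β ≤ (β * (y / x) + (1 - β)) * x ^ β := by
    rw [div_le_iff₀ hxb] at key; linarith
  have hxb1 : x ^ (β - 1) = x ^ β / x := by
    rw [Real.rpow_sub hx, Real.rpow_one]
  rw [hxb1]
  have : (β * (y / x) + (1 - β)) * x ^ β = x ^ β - β * (x ^ β / x) * (x - y) := by
    field_simp
    ring
  linarith [this ▸ key2]

/-- Uniform first-order lower bound on a bounded interval. -/
lemma my_L1 {β lo hi x y : ℝ} (hβ : 0 < β) (hlo : 0 < lo) (hloy : lo ≤ y)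
    (hyx : y ≤ x) (hxhi : x ≤ hi) :
    min 1 β * min (lo ^ (β - 1)) (hi ^ (β - 1)) * (x - y) ≤ x ^ β - y ^ β := by
  have hy : 0 < y := hlo.trans_le hloy
  have hx : 0 < x := hy.trans_le hyx
  have hmin0 : 0 < min 1 β := lt_min one_pos hβ
  have hmin1 : 0 < min (lo ^ (β - 1)) (hi ^ (β - 1)) :=
    lt_min (Real.rpow_pos_of_pos hlo _)
      (Real.rpow_pos_of_pos (hlo.trans_le (hloy.trans (hyx.trans hxhi))) _)
  rcases le_or_gt 1 β with h1 | h1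
  · have ht := my_tangent h1 hx.le hy
    have hy1 : lo ^ (β - 1) ≤ y ^ (β - 1) :=
      Real.rpow_le_rpow hlo.le hloy (by linarith)
    have : min 1 β * min (lo ^ (β - 1)) (hi ^ (β - 1)) * (x - y)
        ≤ β * y ^ (β - 1) * (x - y) := by
      apply mul_le_mul_of_nonneg_right _ (by linarith)
      apply mul_le_mul (min_le_right _ _ |>.trans le_rfl)
        ((min_le_left _ _).trans hy1) hmin1.le hβ.le
    linarith
  · have ht := my_concave_tangent hβ h1.le hy hyx
    have hx1 : hi ^ (β - 1) ≤ x ^ (β - 1) :=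
      Real.rpow_le_rpow_of_nonpos hx hxhi (by linarith)
    have : min 1 β * min (lo ^ (β - 1)) (hi ^ (β - 1)) * (x - y)
        ≤ β * x ^ (β - 1) * (x - y) := by
      apply mul_le_mul_of_nonneg_right _ (by linarith)
      exact mul_le_mul (min_le_right _ _)
        ((min_le_right _ _).trans hx1) hmin1.le hβ.le
    linarith

lemma my_young_final {x t δ R : ℝ} (hδ : 0 < δ) (ht : 0 ≤ t)
    (h : x ^ 2 ≤ 4 * δ * R) : |x| * t ≤ δ * t ^ 2 + R := by
  have key : (4 * δ) * (|x| * t) ≤ (4 * δ) * (δ * t ^ 2 + R) := by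
    nlinarith [sq_nonneg (|x| - 2 * δ * t), sq_abs x, abs_nonneg x]
  exact le_of_mul_le_mul_left key (by positivity)

lemma my_final2 {ϱ r t C X δ : ℝ} (ht : 0 ≤ t) (hr : 0 < r) (hrϱ : r ≤ ϱ)
    (hC : 1 ≤ C) (hδ : 0 ≤ δ) (h7 : ϱ ≤ C * X) (hX : 0 ≤ X) :
    (ϱ - r) * t ≤ δ * t ^ 2 + C * (X + ϱ * t ^ 2) := by
  have hϱ0 : 0 ≤ ϱ := hr.le.trans hrϱ
  nlinarith [mul_nonneg hϱ0 (sq_nonneg (t - 1)), mul_nonneg hr.le ht,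
    mul_nonneg hδ (sq_nonneg t),
    mul_nonneg (show (0:ℝ) ≤ C - 1 by linarith) (mul_nonneg hϱ0 (sq_nonneg t))]

set_option maxHeartbeats 1000000 in
/-- Cut-off estimate: for every `δ > 0` there is `C > 0` (depending only on
`a, γ, r̲, r̄, δ`) such that for all `ϱ ≥ 0`, `r ∈ [r̲, r̄]` and `w ∈ ℝ^d`,
`|ϱ - r| ‖w‖ ≤ δ ‖w‖² + C (E(ϱ|r) + ϱ ‖w‖²)`, where
`E(ϱ|r) = H(ϱ) - H(r) - H'(r)(ϱ - r)` and `H(ϱ) = (a/(γ-1)) ϱ^γ`. -/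
theorem stmt_6 (d : ℕ) (hd : 1 ≤ d) (a γ rlo rhi : ℝ) (ha : 0 < a) (hγ : 1 < γ)
    (hrlo : 0 < rlo) (hr : rlo ≤ rhi) :
    ∀ δ : ℝ, 0 < δ →
      ∃ C : ℝ, 0 < C ∧
        ∀ ϱ : ℝ, 0 ≤ ϱ →
          ∀ r : ℝ, r ∈ Set.Icc rlo rhi →
            ∀ w : EuclideanSpace ℝ (Fin d),
              |ϱ - r| * ‖w‖ ≤
                δ * ‖w‖ ^ 2 +
                  C * ((a / (γ - 1) * ϱ ^ γ - a / (γ - 1) * r ^ γ -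
                        a * γ / (γ - 1) * r ^ (γ - 1) * (ϱ - r)) + ϱ * ‖w‖ ^ 2) := by
  intro δ hδ
  have hβ : 0 < γ - 1 := by linarith
  have hrhi : 0 < rhi := hrlo.trans_le hr
  set A : ℝ := a / (γ - 1) with hA
  have hApos : 0 < A := by positivity
  set K : ℝ := (γ + 1) ^ (1 / (γ - 1)) with hKdef
  have hKpos : 0 < K := Real.rpow_pos_of_pos (by linarith) _
  have hK1 : 1 ≤ K := Real.one_le_rpow (by linarith) (by positivity)
  have hKβ : K ^ (γ - 1) = γ + 1 := by
    rw [hKdef, ← Real.rpow_mul (by linarith : (0:ℝ) ≤ γ + 1),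
      one_div, inv_mul_cancel₀ (by linarith : γ - 1 ≠ 0), Real.rpow_one]
  have hKrhi : 0 < K * rhi := by positivity
  set c₀ : ℝ := min 1 (γ - 1) * min ((rlo / 2) ^ (γ - 1 - 1)) ((K * rhi) ^ (γ - 1 - 1))
    with hc₀def
  have hc₀ : 0 < c₀ := by
    apply mul_pos (lt_min one_pos hβ)
    exact lt_min (Real.rpow_pos_of_pos (by positivity) _) (Real.rpow_pos_of_pos hKrhi _)
  set C : ℝ := 1 / (δ * A * γ * c₀) + 1 / (A * rhi ^ (γ - 1)) + 1 with hCdef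
  have hP : (0:ℝ) < rhi ^ (γ - 1) := Real.rpow_pos_of_pos hrhi _
  have hγ0 : (0:ℝ) < γ := by linarith
  have hC1 : (1:ℝ) ≤ C := by
    have h1 : 0 < 1 / (δ * A * γ * c₀) := by positivity
    have h2 : 0 < 1 / (A * rhi ^ (γ - 1)) := by positivity
    simp only [hCdef]; linarith
  have hCpos : 0 < C := by linarith
  refine ⟨C, hCpos, ?_⟩
  intro ϱ hϱ r hrmem w
  obtain ⟨hr1, hr2⟩ := hrmem
  have hr0 : 0 < r := hrlo.trans_le hr1
  set t : ℝ := ‖w‖ with htdef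
  have ht : 0 ≤ t := norm_nonneg w
  set E' : ℝ := ϱ ^ γ - r ^ γ - γ * r ^ (γ - 1) * (ϱ - r) with hE'def
  have heq : a / (γ - 1) * ϱ ^ γ - a / (γ - 1) * r ^ γ -
      a * γ / (γ - 1) * r ^ (γ - 1) * (ϱ - r) = A * E' := by
    rw [hE'def, hA]; ring
  rw [heq]
  have hEnn : 0 ≤ E' := by
    have := my_tangent hγ.le hϱ hr0
    rw [hE'def]; linarith
  have hAE : 0 ≤ A * E' := mul_nonneg hApos.le hEnn
  have hϱt : 0 ≤ ϱ * t ^ 2 := mul_nonneg hϱ (sq_nonneg t)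
  have hrhiK : rhi ≤ K * rhi := le_mul_of_one_le_left hrhi.le hK1
  rcases le_or_gt ϱ (K * rhi) with hreg | hreg
  · -- bounded region: quadratic lower bound on E'
    have hm0 : 0 < (ϱ + r) / 2 := by linarith
    have t1 := my_tangent hγ.le hϱ hm0
    have t2 := my_tangent hγ.le hm0.le hr0
    have hq : γ * c₀ * (ϱ - r) ^ 2 ≤ 4 * E' := by
      rcases le_or_gt r ϱ with hcase | hcase
      · have L := my_L1 hβ (by positivity : (0:ℝ) < rlo / 2) (by linarith)
          (by linarith : r ≤ (ϱ + r) / 2)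
          (by linarith : (ϱ + r) / 2 ≤ K * rhi)
        rw [← hc₀def] at L
        have L2 : γ * (c₀ * ((ϱ + r) / 2 - r)) * (ϱ - (ϱ + r) / 2) ≤
            γ * (((ϱ + r) / 2) ^ (γ - 1) - r ^ (γ - 1)) * (ϱ - (ϱ + r) / 2) := by
          apply mul_le_mul_of_nonneg_right _ (by linarith)
          exact mul_le_mul_of_nonneg_left L (by linarith)
        rw [hE'def]; linarith [t1, t2, L2]
      · have L := my_L1 hβ (by positivity : (0:ℝ) < rlo / 2) (by linarith)
          (by linarith : (ϱ + r) / 2 ≤ r)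
          (by linarith : r ≤ K * rhi)
        rw [← hc₀def] at L
        have L2 : γ * (c₀ * (r - (ϱ + r) / 2)) * ((ϱ + r) / 2 - ϱ) ≤
            γ * (r ^ (γ - 1) - ((ϱ + r) / 2) ^ (γ - 1)) * ((ϱ + r) / 2 - ϱ) := by
          apply mul_le_mul_of_nonneg_right _ (by linarith)
          exact mul_le_mul_of_nonneg_left L (by linarith)
        rw [hE'def]; linarith [t1, t2, L2]
    -- from `hq` to the final bound via Young's inequality
    have hb : (ϱ - r) ^ 2 ≤ 4 * δ * (C * (A * E' + ϱ * t ^ 2)) := by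
      have h3 : 1 / (δ * A * γ * c₀) ≤ C := by
        have h2 : 0 < 1 / (A * rhi ^ (γ - 1)) := by positivity
        simp only [hCdef]; linarith
      have h4 : A * E' ≤ A * E' + ϱ * t ^ 2 := by linarith
      have h5 : 1 / (δ * A * γ * c₀) * (A * E') ≤ C * (A * E' + ϱ * t ^ 2) :=
        calc 1 / (δ * A * γ * c₀) * (A * E') ≤ C * (A * E') :=
              mul_le_mul_of_nonneg_right h3 hAE
          _ ≤ C * (A * E' + ϱ * t ^ 2) := mul_le_mul_of_nonneg_left h4 hCpos.le
      have hid : 4 * δ * (1 / (δ * A * γ * c₀) * (A * E')) = 4 * E' / (γ * c₀) := by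
        field_simp
      have h6 : (ϱ - r) ^ 2 ≤ 4 * E' / (γ * c₀) := by
        rw [le_div_iff₀ (by positivity)]
        linarith [hq]
      calc (ϱ - r) ^ 2 ≤ 4 * E' / (γ * c₀) := h6
        _ = 4 * δ * (1 / (δ * A * γ * c₀) * (A * E')) := hid.symm
        _ ≤ 4 * δ * (C * (A * E' + ϱ * t ^ 2)) := by
            apply mul_le_mul_of_nonneg_left h5 (by positivity)
    have := my_young_final hδ ht hb
    linarith
  · -- large-density region
    have hϱpos : 0 < ϱ := hKrhi.trans hreg
    have hϱr : r ≤ ϱ := by linarith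
    have e1 : ϱ ^ γ = ϱ ^ (γ - 1) * ϱ := by
      have := Real.rpow_add_one hϱpos.ne' (γ - 1)
      rw [show γ - 1 + 1 = γ by ring] at this; exact this
    have e2 : r ^ γ = r ^ (γ - 1) * r := by
      have := Real.rpow_add_one hr0.ne' (γ - 1)
      rw [show γ - 1 + 1 = γ by ring] at this; exact this
    have e3 : (γ + 1) * rhi ^ (γ - 1) ≤ ϱ ^ (γ - 1) := by
      have h := Real.rpow_le_rpow hKrhi.le hreg.le (by linarith : (0:ℝ) ≤ γ - 1)
      rw [Real.mul_rpow hKpos.le hrhi.le, hKβ] at h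
      exact h
    have e4 : r ^ (γ - 1) ≤ rhi ^ (γ - 1) :=
      Real.rpow_le_rpow hr0.le hr2 (by linarith)
    have e3' := mul_le_mul_of_nonneg_right e3 hϱ
    have e5 : γ * (r ^ (γ - 1) * ϱ) ≤ γ * (rhi ^ (γ - 1) * ϱ) :=
      mul_le_mul_of_nonneg_left (mul_le_mul_of_nonneg_right e4 hϱ) hγ0.le
    have e6 : 0 ≤ (γ - 1) * (r ^ (γ - 1) * r) := by positivity
    have hE2 : rhi ^ (γ - 1) * ϱ ≤ E' := by
      rw [hE'def]; linarith [e1, e2, e3', e5, e6]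
    have h7 : ϱ ≤ C * (A * E') := by
      have h8 : A * (rhi ^ (γ - 1) * ϱ) ≤ A * E' := mul_le_mul_of_nonneg_left hE2 hApos.le
      have h9 : ϱ = 1 / (A * rhi ^ (γ - 1)) * (A * (rhi ^ (γ - 1) * ϱ)) := by
        field_simp
      have h10 : 1 / (A * rhi ^ (γ - 1)) ≤ C := by
        have h1 : 0 < 1 / (δ * A * γ * c₀) := by positivity
        simp only [hCdef]; linarith
      calc ϱ = 1 / (A * rhi ^ (γ - 1)) * (A * (rhi ^ (γ - 1) * ϱ)) := h9
        _ ≤ 1 / (A * rhi ^ (γ - 1)) * (A * E') :=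
            mul_le_mul_of_nonneg_left h8 (by positivity)
        _ ≤ C * (A * E') := mul_le_mul_of_nonneg_right h10 hAE
    have habs : |ϱ - r| = ϱ - r := abs_of_nonneg (by linarith)
    rw [habs]
    exact my_final2 ht hr0 hϱr hC1 hδ.le h7 hAE
end

section
/- Let b : (0,∞) → ℝ be twice continuously differentiable, let u ∈ ℝ and ϱ_in, ϱ_out > 0, and define the upwind value ϱ^up := ϱ_in if u ≥ 0 and ϱ^up := ϱ_out if u < 0. Then there exists ζ in the closed interval with endpoints ϱ_in and ϱ_out such that: u ϱ^up ( b'(ϱ_out) − b'(ϱ_in) ) = u [ (ϱ_out b'(ϱ_out) − b(ϱ_out)) − (ϱ_in b'(ϱ_in) − b(ϱ_in)) ] − (1/2) |u| b''(ζ) (ϱ_out − ϱ_in)². -/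
/-! After cancelling the terms `u ϱ^up b'`, the identity says that
`b(ϱ^up) - b(ϱ^down) - b'(ϱ^down) (ϱ^up - ϱ^down)` equals `(1/2) b''(ζ) (ϱout - ϱin)²`:
it is the second-order Taylor expansion of `b` about the downwind value, evaluated at the
upwind value, with the Lagrange form of the remainder. -/

open Set

theorem exists_uIoo_ratio_hasDerivAt_eq_ratio_slope (f f' g g' : ℝ → ℝ) {a b : ℝ}
    (hab : a ≠ b) (hff' : ∀ x ∈ uIcc a b, HasDerivAt f (f' x) x)
    (hgg' : ∀ x ∈ uIcc a b, HasDerivAt g (g' x) x) :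
    ∃ c ∈ uIoo a b, (g b - g a) * f' c = (f b - f a) * g' c := by
  rcases hab.lt_or_gt with h | h
  · rw [uIcc_of_le h.le] at hff' hgg'
    rw [uIoo_of_lt h]
    exact exists_ratio_hasDerivAt_eq_ratio_slope f f' h
      (fun x hx => (hff' x hx).continuousAt.continuousWithinAt)
      (fun x hx => hff' x (Ioo_subset_Icc_self hx)) g g'
      (fun x hx => (hgg' x hx).continuousAt.continuousWithinAt)
      (fun x hx => hgg' x (Ioo_subset_Icc_self hx))
  · rw [uIcc_of_ge h.le] at hff' hgg'
    rw [uIoo_of_gt h]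
    obtain ⟨c, hc, hslope⟩ := exists_ratio_hasDerivAt_eq_ratio_slope f f' h
      (fun x hx => (hff' x hx).continuousAt.continuousWithinAt)
      (fun x hx => hff' x (Ioo_subset_Icc_self hx)) g g'
      (fun x hx => (hgg' x hx).continuousAt.continuousWithinAt)
      (fun x hx => hgg' x (Ioo_subset_Icc_self hx))
    exact ⟨c, hc, by linear_combination -hslope⟩

/-- Cauchy's mean value theorem for `t ↦ f t + f' t * (c - t)` and `t ↦ (c - t) ^ 2`,
whose derivatives share the factor `c - t`. -/
theorem exists_uIcc_taylor_two_lagrange {f f' f'' : ℝ → ℝ} {a c : ℝ}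
    (hf : ∀ x ∈ uIcc a c, HasDerivAt f (f' x) x)
    (hf' : ∀ x ∈ uIcc a c, HasDerivAt f' (f'' x) x) :
    ∃ ζ ∈ uIcc a c, f c - f a - f' a * (c - a) = 1 / 2 * f'' ζ * (c - a) ^ 2 := by
  rcases eq_or_ne a c with rfl | hac
  · exact ⟨a, left_mem_uIcc, by ring⟩
  have hlin (t : ℝ) : HasDerivAt (fun x => c - x) (-1) t := (hasDerivAt_id t).const_sub c
  obtain ⟨ζ, hζ, hslope⟩ := exists_uIoo_ratio_hasDerivAt_eq_ratio_slope
    (fun t => f t + f' t * (c - t)) (fun t => f'' t * (c - t))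
    (fun t => (c - t) ^ 2) (fun t => -2 * (c - t)) hac
    (fun t ht => ((hf t ht).add ((hf' t ht).mul (hlin t))).congr_deriv (by ring))
    (fun t _ => ((hlin t).pow 2).congr_deriv (by push_cast; ring))
  have hζc : c - ζ ≠ 0 := sub_ne_zero.mpr fun h => right_notMem_uIoo (h ▸ hζ)
  refine ⟨ζ, uIoo_subset_uIcc_self hζ, mul_right_cancel₀ hζc ?_⟩
  linear_combination hslope / 2

theorem stmt_12_general (b b' b'' : ℝ → ℝ)
    (hb' : ∀ x ∈ Set.Ioi (0 : ℝ), HasDerivAt b (b' x) x)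
    (hb'' : ∀ x ∈ Set.Ioi (0 : ℝ), HasDerivAt b' (b'' x) x)
    (u ϱin ϱout : ℝ) (hin : 0 < ϱin) (hout : 0 < ϱout) :
    ∃ ζ ∈ Set.uIcc ϱin ϱout,
      u * (if 0 ≤ u then ϱin else ϱout) * (b' ϱout - b' ϱin) =
        u * ((ϱout * b' ϱout - b ϱout) - (ϱin * b' ϱin - b ϱin)) -
          1 / 2 * |u| * b'' ζ * (ϱout - ϱin) ^ 2 := by
  have hpos : uIcc ϱin ϱout ⊆ Ioi 0 := fun x hx => (lt_min hin hout).trans_le hx.1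
  rcases le_or_gt 0 u with hu | hu
  · rw [uIcc_comm] at hpos ⊢
    obtain ⟨ζ, hζ, htaylor⟩ := exists_uIcc_taylor_two_lagrange
      (fun x hx => hb' x (hpos hx)) (fun x hx => hb'' x (hpos hx))
    refine ⟨ζ, hζ, ?_⟩
    rw [if_pos hu, abs_of_nonneg hu]
    linear_combination (-u) * htaylor
  · obtain ⟨ζ, hζ, htaylor⟩ := exists_uIcc_taylor_two_lagrange
      (fun x hx => hb' x (hpos hx)) (fun x hx => hb'' x (hpos hx))
    refine ⟨ζ, hζ, ?_⟩
    rw [if_neg hu.not_ge, abs_of_neg hu]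
    linear_combination u * htaylor

/-- Per-face core of the renormalized discrete continuity equation: if `b` is
twice continuously differentiable on `(0,∞)` (with derivative `b'` and second
derivative `b''`), then for `ϱ_in, ϱ_out > 0` there exists an intermediate
point `ζ` between `ϱ_in` and `ϱ_out` with
`u ϱ^up (b'(ϱ_out) - b'(ϱ_in))
  = u [(ϱ_out b'(ϱ_out) - b(ϱ_out)) - (ϱ_in b'(ϱ_in) - b(ϱ_in))]
    - (1/2) |u| b''(ζ) (ϱ_out - ϱ_in)²`. -/
theorem stmt_12 (b b' b'' : ℝ → ℝ)
    (hb' : ∀ x ∈ Set.Ioi (0 : ℝ), HasDerivAt b (b' x) x)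
    (hb'' : ∀ x ∈ Set.Ioi (0 : ℝ), HasDerivAt b' (b'' x) x)
    (hb''c : ContinuousOn b'' (Set.Ioi (0 : ℝ)))
    (u ϱin ϱout : ℝ) (hin : 0 < ϱin) (hout : 0 < ϱout) :
    ∃ ζ ∈ Set.uIcc ϱin ϱout,
      u * (if 0 ≤ u then ϱin else ϱout) * (b' ϱout - b' ϱin) =
        u * ((ϱout * b' ϱout - b ϱout) - (ϱin * b' ϱin - b ϱin)) -
          1 / 2 * |u| * b'' ζ * (ϱout - ϱin) ^ 2 :=
  stmt_12_general b b' b'' hb' hb'' u ϱin ϱout hin hout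
end
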